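/- arXiv:2202.05555 — 4 statements merged into one kernel-verified Lean document; each statement's English description precedes it below -/
import Mathlib

section
/- The eigenvalues of the n×n tridiagonal matrix with diagonal entries a, off-diagonal entries b, and corner corrections ε = φ = -1 (i.e., top-left and bottom-right diagonal entries equal a - b), are exactly a + 2b cos(jπ/n) for j = 1,...,n. -/
open Matrix

open Polynomial in
private lemma charpoly_eval_eq_det' {n : ℕ} (M : Matrix (Fin n) (Fin n) ℝ) (μ : ℝ) :
    M.charpoly.eval μ = (μ • (1 : Matrix (Fin n) (Fin n) ℝ) - M).det := by
  rw [Matrix.charpoly, eval_det, matPolyEquiv_charmatrix]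
  simp [smul_one_eq_diagonal]
lemma mem_spectrum_iff_det {n : ℕ} (M : Matrix (Fin n) (Fin n) ℝ) (μ : ℝ) :
    μ ∈ spectrum ℝ M ↔ (μ • (1 : Matrix (Fin n) (Fin n) ℝ) - M).det = 0 := by
  rw [spectrum.mem_iff, Matrix.isUnit_iff_isUnit_det, isUnit_iff_ne_zero, not_not]
  congr! 2
  rw [Matrix.algebraMap_eq_diagonal, smul_one_eq_diagonal]
  rfl

lemma mem_spectrum_of_eigvec {n : ℕ} (M : Matrix (Fin n) (Fin n) ℝ) (μ : ℝ)
    (v : Fin n → ℝ) (hv : v ≠ 0) (h : M *ᵥ v = μ • v) : μ ∈ spectrum ℝ M := by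
  rw [mem_spectrum_iff_det, ← Matrix.exists_mulVec_eq_zero_iff]
  exact ⟨v, hv, by rw [Matrix.sub_mulVec, Matrix.smul_mulVec, Matrix.one_mulVec, h, sub_self]⟩

/-- The τ-algebra matrix `T_{n,-1,-1}`: symmetric tridiagonal with diagonal
`(a-b, a, …, a, a-b)` and off-diagonals `b`. -/
def tauMM (n : ℕ) (a b : ℝ) : Matrix (Fin n) (Fin n) ℝ :=
  Matrix.of fun i j =>
    if i = j then (if (i : ℕ) = 0 ∨ (i : ℕ) = n - 1 then a - b else a)
    else if (i : ℕ) = (j : ℕ) + 1 ∨ (j : ℕ) = (i : ℕ) + 1 then b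
    else 0

lemma sum_coe_eq {n m : ℕ} (g : Fin n → ℝ) :
    (∑ k : Fin n, if (k : ℕ) = m then g k else 0) = if h : m < n then g ⟨m, h⟩ else 0 := by
  split_ifs with h
  · rw [Finset.sum_eq_single ⟨m, h⟩]
    · simp
    · intro k _ hk
      rw [if_neg]
      simpa [Fin.ext_iff] using hk
    · simp
  · apply Finset.sum_eq_zero
    intro k _
    rw [if_neg]
    exact fun hk => h (hk ▸ k.isLt)

lemma tauMM_mulVec_row (n : ℕ) (a b : ℝ) (v : Fin n → ℝ) (i : Fin n) :
    (tauMM n a b *ᵥ v) i =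
      (if (i : ℕ) = 0 ∨ (i : ℕ) = n - 1 then a - b else a) * v i
      + (if h : (i : ℕ) + 1 < n then b * v ⟨(i : ℕ) + 1, h⟩ else 0)
      + (if h : (i : ℕ) - 1 < n ∧ 1 ≤ (i : ℕ) then b * v ⟨(i : ℕ) - 1, h.1⟩ else 0) := by
  have : (tauMM n a b *ᵥ v) i = ∑ k : Fin n, tauMM n a b i k * v k := rfl
  rw [this]
  have step : ∀ k : Fin n, tauMM n a b i k * v k =
      (if i = k then (if (i : ℕ) = 0 ∨ (i : ℕ) = n - 1 then a - b else a) * v k else 0)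
      + (if (k : ℕ) = (i : ℕ) + 1 then b * v k else 0)
      + (if (k : ℕ) = (i : ℕ) - 1 ∧ 1 ≤ (i : ℕ) then b * v k else 0) := by
    intro k
    by_cases h1 : i = k
    · subst h1
      simp only [tauMM, Matrix.of_apply]
      rw [if_true, if_true,
        if_neg (show ¬((i : ℕ) = (i : ℕ) + 1) by omega),
        if_neg (show ¬((i : ℕ) = (i : ℕ) - 1 ∧ 1 ≤ (i : ℕ)) by omega)]
      ring
    · have h1' : (i : ℕ) ≠ (k : ℕ) := fun h => h1 (Fin.ext h)
      simp only [tauMM, Matrix.of_apply, if_neg h1]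
      by_cases h2 : (k : ℕ) = (i : ℕ) + 1
      · rw [if_pos (Or.inr h2), if_pos h2, if_neg (by omega)]
        ring
      · by_cases h3 : (k : ℕ) = (i : ℕ) - 1 ∧ 1 ≤ (i : ℕ)
        · rw [if_pos (Or.inl (by omega)), if_neg h2, if_pos h3]
          ring
        · rw [if_neg (by omega), if_neg h2, if_neg h3]
          ring
  rw [Finset.sum_congr rfl (fun k _ => step k)]
  rw [Finset.sum_add_distrib, Finset.sum_add_distrib, Finset.sum_ite_eq (Finset.univ) i
    (fun k => (if (i : ℕ) = 0 ∨ (i : ℕ) = n - 1 then a - b else a) * v k), if_pos (Finset.mem_univ i)]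
  congr 1
  · congr 1
    rw [sum_coe_eq (fun k => b * v k)]
  · by_cases h4 : 1 ≤ (i : ℕ)
    · have : ∀ k : Fin n, ((k : ℕ) = (i : ℕ) - 1 ∧ 1 ≤ (i : ℕ)) ↔ ((k : ℕ) = (i : ℕ) - 1) := by
        intro k; constructor <;> [exact And.left; exact fun h => ⟨h, h4⟩]
      simp only [this]
      rw [sum_coe_eq (fun k => b * v k)]
      rw [dif_pos (by omega), dif_pos ⟨by omega, h4⟩]
    · rw [dif_neg (by omega)]
      apply Finset.sum_eq_zero
      intro k _
      rw [if_neg (by omega)]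

lemma tauMM_mulVec (n : ℕ) (hn : 2 ≤ n) (a b θ : ℝ) (hend : Real.sin ((n : ℝ) * θ) = 0) :
    tauMM n a b *ᵥ (fun k : Fin n => Real.sin (((k : ℕ) + 1/2) * θ))
      = (a + 2 * b * Real.cos θ) • fun k : Fin n => Real.sin (((k : ℕ) + 1/2) * θ) := by
  have hS : Real.sin θ = 2 * Real.sin (θ/2) * Real.cos (θ/2) := by
    have := Real.sin_two_mul (θ/2); rw [show 2*(θ/2) = θ by ring] at this; exact this
  have hC : Real.cos θ = 2 * Real.cos (θ/2)^2 - 1 := by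
    have := Real.cos_two_mul (θ/2); rw [show 2*(θ/2) = θ by ring] at this; exact this
  funext i
  rw [tauMM_mulVec_row]
  simp only [Pi.smul_apply, smul_eq_mul]
  by_cases hi0 : (i : ℕ) = 0
  · rw [if_pos (Or.inl hi0), dif_pos (show (i : ℕ) + 1 < n by omega),
      dif_neg (show ¬((i : ℕ) - 1 < n ∧ 1 ≤ (i : ℕ)) by omega)]
    simp only [hi0]
    push_cast
    rw [show ((1:ℝ) + 1/2) * θ = θ/2 + θ by ring, show ((0:ℝ) + 1/2) * θ = θ/2 by ring,
      Real.sin_add, hS, hC]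
    ring
  · by_cases hil : (i : ℕ) = n - 1
    · rw [if_pos (Or.inr hil), dif_neg (show ¬((i : ℕ) + 1 < n) by omega),
        dif_pos (show (i : ℕ) - 1 < n ∧ 1 ≤ (i : ℕ) by omega)]
      simp only [hil]
      rw [show ((n - 1 - 1 : ℕ) : ℝ) = (n : ℝ) - 2 by
          rw [Nat.cast_sub (by omega), Nat.cast_sub (by omega)]; push_cast; ring,
        show ((n - 1 : ℕ) : ℝ) = (n : ℝ) - 1 by rw [Nat.cast_sub (by omega)]; push_cast; ring]
      rw [show ((n:ℝ) - 1 + 1/2) * θ = (n:ℝ)*θ - θ/2 by ring,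
        show ((n:ℝ) - 2 + 1/2) * θ = (n:ℝ)*θ - (θ/2 + θ) by ring,
        Real.sin_sub, Real.sin_sub, hend, Real.sin_add, hS, hC]
      ring
    · rw [if_neg (by tauto), dif_pos (show (i : ℕ) + 1 < n by omega),
        dif_pos (show (i : ℕ) - 1 < n ∧ 1 ≤ (i : ℕ) by omega)]
      rw [show (((i : ℕ) - 1 : ℕ) : ℝ) = ((i : ℕ) : ℝ) - 1 by
          rw [Nat.cast_sub (by omega)]; push_cast; ring]
      push_cast
      rw [show (((i:ℕ):ℝ) + 1 + 1/2) * θ = (((i:ℕ):ℝ) + 1/2) * θ + θ by ring,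
        show (((i:ℕ):ℝ) - 1 + 1/2) * θ = (((i:ℕ):ℝ) + 1/2) * θ - θ by ring,
        Real.sin_add, Real.sin_sub]
      ring

/-- the eigenvalues of `T_{n,-1,-1}` are exactly `a + 2b cos(jπ/n)`,
`j = 1,…,n`. -/
theorem eigenvalues_tauMM (n : ℕ) (hn : 2 ≤ n) (a b : ℝ) :
    spectrum ℝ (tauMM n a b) =
      Set.range (fun j : Fin n =>
        a + 2 * b * Real.cos (((j : ℕ) + 1) * Real.pi / n)) := by
  have hπ := Real.pi_pos
  have hnR : (0:ℝ) < (n:ℝ) := by exact_mod_cast Nat.pos_of_ne_zero (by omega)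
  set f : Fin n → ℝ := fun j : Fin n =>
    a + 2 * b * Real.cos (((j : ℕ) + 1) * Real.pi / n) with hf
  have hsub : Set.range f ⊆ spectrum ℝ (tauMM n a b) := by
    rintro x ⟨j, rfl⟩
    set θ : ℝ := (((j : ℕ) : ℝ) + 1) * Real.pi / n with hθ
    have hend : Real.sin ((n : ℝ) * θ) = 0 := by
      have : (n : ℝ) * θ = (((j : ℕ) + 1 : ℕ) : ℝ) * Real.pi := by
        rw [hθ]; push_cast; field_simp
      rw [this, Real.sin_nat_mul_pi]
    have hθpos : 0 < θ := by
      apply div_pos (mul_pos _ hπ) hnR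
      positivity
    have hθle : θ ≤ Real.pi := by
      rw [hθ, div_le_iff₀ hnR]
      have : ((j : ℕ) : ℝ) + 1 ≤ (n : ℝ) := by exact_mod_cast j.isLt
      nlinarith
    have hvne : (fun k : Fin n => Real.sin (((k : ℕ) + 1/2) * θ)) ≠ 0 := by
      intro h0
      have h00 : Real.sin (((((⟨0, by omega⟩ : Fin n) : ℕ) : ℝ) + 1/2) * θ) = 0 :=
        congrFun h0 ⟨0, by omega⟩
      have : (0:ℝ) < ((((⟨0, by omega⟩ : Fin n) : ℕ) : ℝ) + 1/2) * θ := by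
        simp only [Fin.val_mk, Nat.cast_zero]
        nlinarith
      have hlt : ((((⟨0, by omega⟩ : Fin n) : ℕ) : ℝ) + 1/2) * θ < Real.pi := by
        simp only [Fin.val_mk, Nat.cast_zero]
        nlinarith
      exact (Real.sin_pos_of_pos_of_lt_pi this hlt).ne' h00
    exact mem_spectrum_of_eigvec _ _ _ hvne (tauMM_mulVec n hn a b θ hend)
  by_cases hb : b = 0
  · subst hb
    have hM : tauMM n a 0 = Matrix.diagonal (fun _ : Fin n => a) := by
      ext i k
      by_cases h : i = k <;> simp [tauMM, Matrix.diagonal, h]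
    have hne : Nonempty (Fin n) := ⟨⟨0, by omega⟩⟩
    rw [hM, spectrum_diagonal]
    ext x
    simp [hf, eq_comm]
  · have hinj : Function.Injective f := by
      intro j j' h
      have h1 : Real.cos ((((j : ℕ) : ℝ) + 1) * Real.pi / n)
          = Real.cos ((((j' : ℕ) : ℝ) + 1) * Real.pi / n) := by
        have h2 : 2 * b * Real.cos ((((j : ℕ) : ℝ) + 1) * Real.pi / n)
            = 2 * b * Real.cos ((((j' : ℕ) : ℝ) + 1) * Real.pi / n) := by
          have := h; simp only [hf] at this; linarith
        exact mul_left_cancel₀ (by simpa using hb) h2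
      have hmem : ∀ k : Fin n, (((k : ℕ) : ℝ) + 1) * Real.pi / n ∈ Set.Icc 0 Real.pi := by
        intro k
        constructor
        · positivity
        · rw [div_le_iff₀ hnR]
          have : ((k : ℕ) : ℝ) + 1 ≤ (n : ℝ) := by exact_mod_cast k.isLt
          nlinarith
      have h3 := Real.injOn_cos (hmem j) (hmem j') h1
      field_simp at h3
      exact Fin.ext (by exact_mod_cast (by linarith : ((j : ℕ) : ℝ) = ((j' : ℕ) : ℝ)))
    set p := (tauMM n a b).charpoly with hp
    have hp0 : p ≠ 0 := (tauMM n a b).charpoly_monic.ne_zero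
    have hdeg : p.natDegree = n := by
      rw [hp, Matrix.charpoly_natDegree_eq_dim]; exact Fintype.card_fin n
    have hspecsub : spectrum ℝ (tauMM n a b) ⊆ ↑p.roots.toFinset := by
      intro μ hμ
      rw [Finset.mem_coe, Multiset.mem_toFinset, Polynomial.mem_roots hp0]
      rw [mem_spectrum_iff_det] at hμ
      rw [Polynomial.IsRoot, charpoly_eval_eq_det', hμ]
    have hT : p.roots.toFinset = Finset.image f Finset.univ := by
      refine (Finset.eq_of_subset_of_card_le ?_ ?_).symm
      · intro x hx
        rw [Finset.mem_image] at hx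
        obtain ⟨j, -, rfl⟩ := hx
        exact hspecsub (hsub ⟨j, rfl⟩)
      · calc p.roots.toFinset.card ≤ Multiset.card p.roots := Multiset.toFinset_card_le _
          _ ≤ p.natDegree := Polynomial.card_roots' p
          _ = n := hdeg
          _ = (Finset.image f Finset.univ).card := by
              rw [Finset.card_image_of_injective _ hinj, Finset.card_univ, Fintype.card_fin]
    apply Set.Subset.antisymm _ hsub
    intro μ hμ
    have := hspecsub hμ
    rw [hT, Finset.coe_image, Finset.coe_univ, Set.image_univ] at this
    exact this
end

section
/- Let A_n = (1/h_t) T_{N_t}(f_J) ⊗ I_{N_x} + I_{N_t} ⊗ (1/h_x^2) C_{N_x}(f_Q) with N_t = 2. Then the singular values of h_x^2 A_n are, for k = 1,...,N_x, the two values σ_±(k) = sqrt( ((2 g_k^2 + c_h^2)/2) ± (c_h/2) sqrt(4 g_k^2 + c_h^2) ), where g_k = 2 - 2cos(2π(k-1)/N_x) + c_h and c_h = h_x^2/h_t. -/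
open Matrix
open scoped Kronecker

/-- The 2×2 lower bidiagonal Toeplitz matrix `T_2(f_J) = [[1,0],[-1,1]]` (real version). -/
def T2 : Matrix (Fin 2) (Fin 2) ℝ := !![1, 0; -1, 1]

/-- The cyclic shift matrix (real version). -/
def Zmat (m : ℕ) [NeZero m] : Matrix (Fin m) (Fin m) ℝ :=
  Matrix.of fun i j => if i = j + 1 then 1 else 0

/-- The circulant second-difference matrix `C_m(2 - 2cos ξ) = 2I - Z - Zᵀ`. -/
def Cmat (m : ℕ) [NeZero m] : Matrix (Fin m) (Fin m) ℝ :=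
  (2 : ℝ) • 1 - Zmat m - (Zmat m)ᵀ

noncomputable def omg (Nx : ℕ) : ℂ := Complex.exp (2 * Real.pi * Complex.I / Nx)

noncomputable def Fmat (Nx : ℕ) : Matrix (Fin Nx) (Fin Nx) ℂ :=
  Matrix.of fun i j => omg Nx ^ ((i : ℕ) * (j : ℕ))

lemma omg_pow_n (Nx : ℕ) [NeZero Nx] : omg Nx ^ Nx = 1 :=
  (Complex.isPrimitiveRoot_exp Nx (NeZero.ne Nx)).pow_eq_one

lemma pow_mod_eq {ζ : ℂ} {n : ℕ} (h : ζ ^ n = 1) (a : ℕ) : ζ ^ (a % n) = ζ ^ a := by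
  conv_rhs => rw [← Nat.mod_add_div a n]
  rw [pow_add, pow_mul, h, one_pow, mul_one]

lemma det_Fmat_ne_zero (Nx : ℕ) [NeZero Nx] : (Fmat Nx).det ≠ 0 := by
  have hprim := Complex.isPrimitiveRoot_exp Nx (NeZero.ne Nx)
  have : Fmat Nx = Matrix.vandermonde (fun i : Fin Nx => omg Nx ^ (i : ℕ)) := by
    ext i j
    simp [Fmat, Matrix.vandermonde, ← pow_mul, mul_comm]
  rw [this, Matrix.det_vandermonde]
  apply Finset.prod_ne_zero_iff.2
  intro i _
  apply Finset.prod_ne_zero_iff.2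
  intro j hj
  have hij : i < j := Finset.mem_Ioi.1 hj
  intro hzero
  have : omg Nx ^ (j : ℕ) = omg Nx ^ (i : ℕ) := by linear_combination hzero
  exact absurd (hprim.pow_inj j.isLt i.isLt this) (by omega)

noncomputable def cval (Nx : ℕ) (k : Fin Nx) : ℝ :=
  2 - 2 * Real.cos (2 * Real.pi * (k : ℕ) / Nx)

lemma C_mul_F (Nx : ℕ) [NeZero Nx] :
    (Cmat Nx).map (Complex.ofReal) * Fmat Nx
      = Fmat Nx * Matrix.diagonal (fun k => (cval Nx k : ℂ)) := by
  ext i k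
  have hNx : (Nx : ℂ) ≠ 0 := Nat.cast_ne_zero.2 (NeZero.ne Nx)
  set ζ : ℂ := omg Nx ^ (k : ℕ) with hζ
  have hζn : ζ ^ Nx = 1 := by rw [hζ, ← pow_mul, mul_comm, pow_mul, omg_pow_n, one_pow]
  have hζne : ζ ≠ 0 := by
    intro h; rw [h] at hζn; simp [zero_pow (NeZero.ne Nx)] at hζn
  have hF : ∀ j : Fin Nx, Fmat Nx j k = ζ ^ (j : ℕ) := by
    intro j; simp [Fmat, hζ, ← pow_mul, mul_comm]
  have hL : ((Cmat Nx).map (Complex.ofReal) * Fmat Nx) i k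
      = 2 * ζ ^ (i : ℕ) - ζ ^ (((i - 1 : Fin Nx)) : ℕ) - ζ ^ (((i + 1 : Fin Nx)) : ℕ) := by
    rw [Matrix.mul_apply]
    have key : ∀ j : Fin Nx, (Cmat Nx).map (Complex.ofReal) i j * Fmat Nx j k
        = (if j = i then 2 * ζ ^ (j:ℕ) else 0)
          - (if j = i - 1 then ζ ^ (j:ℕ) else 0)
          - (if j = i + 1 then ζ ^ (j:ℕ) else 0) := by
      intro j
      rw [hF]
      have h1 : (i = j + 1) ↔ (j = i - 1) := by
        constructor <;> intro h
        · subst h; simp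
        · subst h; simp
      simp only [Cmat, Zmat, Matrix.map_apply, Matrix.sub_apply, Matrix.smul_apply,
        Matrix.one_apply, Matrix.transpose_apply, Matrix.of_apply, smul_eq_mul]
      simp only [← h1]
      push_cast
      split_ifs <;> push_cast <;>
        first
        | exact absurd ‹i = j› (fun h => ‹¬j = i› h.symm)
        | exact absurd ‹j = i› (fun h => ‹¬i = j› h.symm)
        | ring
    rw [Finset.sum_congr rfl (fun j _ => key j)]
    rw [Finset.sum_sub_distrib, Finset.sum_sub_distrib]
    simp [Finset.sum_ite_eq']
  have hsucc : ∀ a : Fin Nx, ζ ^ (((a + 1 : Fin Nx)) : ℕ) = ζ ^ ((a:ℕ)) * ζ := by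
    intro a
    have hv : ((a + 1 : Fin Nx) : ℕ) = ((a : ℕ) + 1) % Nx := by
      rw [Fin.val_add, Fin.val_one']
      conv_rhs => rw [Nat.add_mod, Nat.mod_eq_of_lt a.isLt]
    rw [hv, pow_mod_eq hζn, pow_succ]
  have hi1 : ζ ^ (((i + 1 : Fin Nx)) : ℕ) = ζ ^ ((i:ℕ)) * ζ := hsucc i
  have hi2 : ζ ^ (((i - 1 : Fin Nx)) : ℕ) = ζ ^ ((i:ℕ)) * ζ⁻¹ := by
    have := hsucc (i - 1)
    rw [sub_add_cancel] at this
    field_simp [this]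
    exact this.symm
  have hc : ((cval Nx k : ℝ) : ℂ) = 2 - ζ - ζ⁻¹ := by
    simp only [cval]
    set θ : ℝ := 2 * Real.pi * (k:ℕ) / Nx with hθdef
    have hθ : ζ = Complex.exp ((θ:ℂ) * Complex.I) := by
      rw [hζ, omg, ← Complex.exp_nat_mul]
      congr 1
      rw [hθdef]
      push_cast
      ring
    have hζi : ζ⁻¹ = Complex.exp (-(θ:ℂ) * Complex.I) := by
      rw [hθ, ← Complex.exp_neg]
      congr 1
      ring
    have h2c := Complex.two_cos ((θ : ℝ) : ℂ)
    rw [hζi, hθ]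
    push_cast [Complex.ofReal_cos]
    linear_combination -h2c
  rw [hL, Matrix.mul_diagonal, hF, hi1, hi2, hc]
  field_simp
  ring

section Conj
variable (Nx : ℕ) [NeZero Nx]

/-- complex version of T2 -/
def T2c : Matrix (Fin 2) (Fin 2) ℂ := !![1, 0; -1, 1]

lemma T2_map : T2.map Complex.ofReal = T2c := by
  ext a b
  fin_cases a <;> fin_cases b <;> simp [T2, T2c]

noncomputable def Pmat : Matrix (Fin 2 × Fin Nx) (Fin 2 × Fin Nx) ℂ :=
  (1 : Matrix (Fin 2) (Fin 2) ℂ) ⊗ₖ Fmat Nx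

lemma detP_ne : (Pmat Nx).det ≠ 0 := by
  rw [Pmat, Matrix.det_kronecker]
  simp only [Matrix.det_one, one_pow, one_mul]
  exact pow_ne_zero _ (det_Fmat_ne_zero Nx)

lemma Cmat_symm : (Cmat Nx)ᵀ = Cmat Nx := by
  simp only [Cmat, Matrix.transpose_sub, Matrix.transpose_smul, Matrix.transpose_one,
    Matrix.transpose_transpose]
  exact sub_right_comm _ _ _

lemma Cc_symm : ((Cmat Nx).map Complex.ofReal)ᵀ = (Cmat Nx).map Complex.ofReal := by
  rw [← Matrix.transpose_map, Cmat_symm]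

noncomputable def Dmat (c : ℝ) : Matrix (Fin 2 × Fin Nx) (Fin 2 × Fin Nx) ℂ :=
  (c : ℂ) • (T2c ⊗ₖ (1 : Matrix (Fin Nx) (Fin Nx) ℂ))
    + (1 : Matrix (Fin 2) (Fin 2) ℂ) ⊗ₖ Matrix.diagonal (fun k => (cval Nx k : ℂ))

noncomputable def Bc (c : ℝ) : Matrix (Fin 2 × Fin Nx) (Fin 2 × Fin Nx) ℂ :=
  (c : ℂ) • (T2c ⊗ₖ (1 : Matrix (Fin Nx) (Fin Nx) ℂ))
    + (1 : Matrix (Fin 2) (Fin 2) ℂ) ⊗ₖ ((Cmat Nx).map Complex.ofReal)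

lemma Bc_mul_P (c : ℝ) : Bc Nx c * Pmat Nx = Pmat Nx * Dmat Nx c := by
  rw [Bc, Dmat, Pmat, add_mul, mul_add, smul_mul_assoc, mul_smul_comm,
    ← Matrix.mul_kronecker_mul, ← Matrix.mul_kronecker_mul,
    ← Matrix.mul_kronecker_mul, ← Matrix.mul_kronecker_mul,
    C_mul_F, one_mul, one_mul, mul_one, mul_one]
  rw [Matrix.one_mul]

lemma BcT_mul_P (c : ℝ) : (Bc Nx c)ᵀ * Pmat Nx
    = Pmat Nx * ((c : ℂ) • (T2cᵀ ⊗ₖ (1 : Matrix (Fin Nx) (Fin Nx) ℂ))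
        + (1 : Matrix (Fin 2) (Fin 2) ℂ) ⊗ₖ Matrix.diagonal (fun k => (cval Nx k : ℂ))) := by
  have hT : (Bc Nx c)ᵀ = (c : ℂ) • (T2cᵀ ⊗ₖ (1 : Matrix (Fin Nx) (Fin Nx) ℂ))
      + (1 : Matrix (Fin 2) (Fin 2) ℂ) ⊗ₖ ((Cmat Nx).map Complex.ofReal) := by
    rw [Bc, Matrix.transpose_add, Matrix.transpose_smul,
      ← Matrix.kroneckerMap_transpose, ← Matrix.kroneckerMap_transpose,
      Matrix.transpose_one, Matrix.transpose_one, Cc_symm]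
  rw [hT, Pmat, add_mul, mul_add, smul_mul_assoc, mul_smul_comm,
    ← Matrix.mul_kronecker_mul, ← Matrix.mul_kronecker_mul,
    ← Matrix.mul_kronecker_mul, ← Matrix.mul_kronecker_mul,
    C_mul_F, one_mul, one_mul, mul_one, mul_one]
  rw [Matrix.one_mul]

/-- the 2×2 blocks of `Dmat` -/
noncomputable def dblk (c : ℝ) (k : Fin Nx) : Matrix (Fin 2) (Fin 2) ℂ :=
  !![((cval Nx k + c : ℝ) : ℂ), 0; -(c : ℂ), ((cval Nx k + c : ℝ) : ℂ)]

lemma Dmat_eq : ∀ c : ℝ, Dmat Nx c = Matrix.blockDiagonal (dblk Nx c) := by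
  intro c
  ext ⟨a, i⟩ ⟨b, k⟩
  simp only [Dmat, Matrix.add_apply, Matrix.smul_apply, Matrix.kroneckerMap_apply,
    Matrix.blockDiagonal_apply, Matrix.one_apply, Matrix.diagonal_apply, dblk]
  by_cases hik : i = k
  · subst hik
    fin_cases a <;> fin_cases b <;> simp [T2c, cval] <;> push_cast <;> ring
  · simp [hik, Ne.symm hik]

lemma DmatT_eq : ∀ c : ℝ, ((c : ℂ) • (T2cᵀ ⊗ₖ (1 : Matrix (Fin Nx) (Fin Nx) ℂ))
      + (1 : Matrix (Fin 2) (Fin 2) ℂ) ⊗ₖ Matrix.diagonal (fun k => (cval Nx k : ℂ)))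
    = Matrix.blockDiagonal (fun k => (dblk Nx c k)ᵀ) := by
  intro c
  ext ⟨a, i⟩ ⟨b, k⟩
  simp only [Matrix.add_apply, Matrix.smul_apply, Matrix.kroneckerMap_apply,
    Matrix.blockDiagonal_apply, Matrix.one_apply, Matrix.diagonal_apply, dblk,
    Matrix.transpose_apply]
  by_cases hik : i = k
  · subst hik
    fin_cases a <;> fin_cases b <;> simp [T2c, cval] <;> push_cast <;> ring
  · simp [hik, Ne.symm hik]

lemma det_block (g c μ : ℂ) :
    (μ • (1 : Matrix (Fin 2) (Fin 2) ℂ) - !![g, 0; -c, g] * !![g, 0; -c, g]ᵀ).det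
      = μ ^ 2 - (2 * g ^ 2 + c ^ 2) * μ + g ^ 4 := by
  rw [Matrix.det_fin_two]
  simp only [Matrix.sub_apply, Matrix.smul_apply, Matrix.one_apply, Matrix.mul_apply,
    Fin.sum_univ_two, Matrix.transpose_apply]
  norm_num [Matrix.cons_val_zero, Matrix.cons_val_one]
  ring

end Conj

section Spec
variable (Nx : ℕ) [NeZero Nx]

def BrR (Nx : ℕ) [NeZero Nx] (c : ℝ) : Matrix (Fin 2 × Fin Nx) (Fin 2 × Fin Nx) ℝ :=
  c • (T2 ⊗ₖ (1 : Matrix (Fin Nx) (Fin Nx) ℝ)) + (1 : Matrix (Fin 2) (Fin 2) ℝ) ⊗ₖ Cmat Nx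

lemma Br_map (c : ℝ) : (BrR Nx c).map Complex.ofReal = Bc Nx c := by
  ext ⟨a, i⟩ ⟨b, k⟩
  have hT : (Complex.ofReal (T2 a b)) = T2c a b := by
    have := congrFun (congrFun T2_map a) b
    simpa [Matrix.map_apply] using this
  simp only [BrR, Bc, Matrix.map_apply, Matrix.add_apply, Matrix.smul_apply,
    Matrix.kroneckerMap_apply, Matrix.one_apply, smul_eq_mul]
  push_cast [apply_ite Complex.ofReal]
  rw [hT]

lemma spec_det {N : Type*} [Fintype N] [DecidableEq N] (M : Matrix N N ℝ) (x : ℝ) :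
    x ∈ spectrum ℝ M ↔ (x • (1 : Matrix N N ℝ) - M).det = 0 := by
  rw [spectrum.mem_iff, Algebra.algebraMap_eq_smul_one,
    Matrix.isUnit_iff_isUnit_det, isUnit_iff_ne_zero, not_not]

lemma spec_char (c : ℝ) (x : ℝ) :
    x ∈ spectrum ℝ (BrR Nx c * (BrR Nx c)ᵀ) ↔
      ∃ k : Fin Nx,
        x ^ 2 - (2 * (cval Nx k + c) ^ 2 + c ^ 2) * x + (cval Nx k + c) ^ 4 = 0 := by
  rw [spec_det]
  have hmap : (x • (1 : Matrix (Fin 2 × Fin Nx) (Fin 2 × Fin Nx) ℝ)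
        - BrR Nx c * (BrR Nx c)ᵀ).map Complex.ofReal
      = (x : ℂ) • (1 : Matrix (Fin 2 × Fin Nx) (Fin 2 × Fin Nx) ℂ) - Bc Nx c * (Bc Nx c)ᵀ := by
    have h1 : ((BrR Nx c * (BrR Nx c)ᵀ).map Complex.ofReal) = Bc Nx c * (Bc Nx c)ᵀ := by
      rw [show (Complex.ofReal : ℝ → ℂ) = ⇑Complex.ofRealHom from rfl, Matrix.map_mul]
      rw [Matrix.transpose_map]
      rw [show ⇑Complex.ofRealHom = (Complex.ofReal : ℝ → ℂ) from rfl, Br_map]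
    ext p q
    simp only [Matrix.map_apply, Matrix.sub_apply, Matrix.smul_apply, Matrix.one_apply,
      smul_eq_mul, Complex.ofReal_sub]
    rw [← h1]
    push_cast [apply_ite Complex.ofReal]
    simp [Matrix.map_apply]
  have hdet : ((x • (1 : Matrix (Fin 2 × Fin Nx) (Fin 2 × Fin Nx) ℝ)
        - BrR Nx c * (BrR Nx c)ᵀ).det : ℂ)
      = ((x : ℂ) • (1 : Matrix (Fin 2 × Fin Nx) (Fin 2 × Fin Nx) ℂ)
        - Bc Nx c * (Bc Nx c)ᵀ).det := by
    rw [show (((x • (1 : Matrix (Fin 2 × Fin Nx) (Fin 2 × Fin Nx) ℝ)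
        - BrR Nx c * (BrR Nx c)ᵀ).det : ℂ)) = _ from Complex.ofRealHom.map_det _,
      RingHom.mapMatrix_apply]
    rw [show ⇑Complex.ofRealHom = (Complex.ofReal : ℝ → ℂ) from rfl, hmap]
  set D1 := Matrix.blockDiagonal (dblk Nx c) with hD1
  set D2 := Matrix.blockDiagonal (fun k => (dblk Nx c k)ᵀ) with hD2
  have h1 : Bc Nx c * Pmat Nx = Pmat Nx * D1 := by
    rw [hD1, ← Dmat_eq]; exact Bc_mul_P Nx c
  have h2 : (Bc Nx c)ᵀ * Pmat Nx = Pmat Nx * D2 := by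
    rw [hD2, ← DmatT_eq]; exact BcT_mul_P Nx c
  have h3 : (Bc Nx c * (Bc Nx c)ᵀ) * Pmat Nx = Pmat Nx * (D1 * D2) := by
    rw [mul_assoc, h2, ← mul_assoc, h1, mul_assoc]
  have h4 : ((x : ℂ) • 1 - Bc Nx c * (Bc Nx c)ᵀ) * Pmat Nx
      = Pmat Nx * ((x : ℂ) • 1 - D1 * D2) := by
    rw [sub_mul, mul_sub, h3, smul_mul_assoc, mul_smul_comm, one_mul, mul_one]
  have h5 : ((x : ℂ) • (1 : Matrix (Fin 2 × Fin Nx) (Fin 2 × Fin Nx) ℂ)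
        - Bc Nx c * (Bc Nx c)ᵀ).det = ((x : ℂ) • 1 - D1 * D2).det := by
    have hh := congrArg Matrix.det h4
    rw [Matrix.det_mul, Matrix.det_mul] at hh
    apply mul_right_cancel₀ (detP_ne Nx)
    rw [hh]; ring
  have h6 : ((x : ℂ) • (1 : Matrix (Fin 2 × Fin Nx) (Fin 2 × Fin Nx) ℂ) - D1 * D2).det
      = ∏ k : Fin Nx, (((x : ℝ) ^ 2 - (2 * (cval Nx k + c) ^ 2 + c ^ 2) * x
          + (cval Nx k + c) ^ 4 : ℝ) : ℂ) := by
    rw [hD1, hD2, ← Matrix.blockDiagonal_mul]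
    have hone : (x : ℂ) • (1 : Matrix (Fin 2 × Fin Nx) (Fin 2 × Fin Nx) ℂ)
        = Matrix.blockDiagonal (fun _ : Fin Nx => (x : ℂ) • 1) := by
      rw [show (fun _ : Fin Nx => (x : ℂ) • (1 : Matrix (Fin 2) (Fin 2) ℂ))
          = (x : ℂ) • (1 : Fin Nx → Matrix (Fin 2) (Fin 2) ℂ) from rfl,
        Matrix.blockDiagonal_smul, Matrix.blockDiagonal_one]
    rw [hone, show Matrix.blockDiagonal (fun _ : Fin Nx => (x:ℂ) • (1 : Matrix (Fin 2) (Fin 2) ℂ))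
          - Matrix.blockDiagonal (fun k => dblk Nx c k * (dblk Nx c k)ᵀ)
        = Matrix.blockDiagonal ((fun _ : Fin Nx => (x:ℂ) • (1 : Matrix (Fin 2) (Fin 2) ℂ))
          - (fun k => dblk Nx c k * (dblk Nx c k)ᵀ)) from
        (Matrix.blockDiagonal_sub _ _).symm,
      Matrix.det_blockDiagonal]
    apply Finset.prod_congr rfl
    intro k _
    have := det_block ((cval Nx k + c : ℝ) : ℂ) (c : ℂ) ((x : ℝ) : ℂ)
    rw [show ((fun _ : Fin Nx => (x:ℂ) • (1 : Matrix (Fin 2) (Fin 2) ℂ))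
        - (fun k => dblk Nx c k * (dblk Nx c k)ᵀ)) k
        = (x:ℂ) • 1 - dblk Nx c k * (dblk Nx c k)ᵀ from rfl]
    rw [show dblk Nx c k = !![((cval Nx k + c : ℝ) : ℂ), 0; -(c:ℂ), ((cval Nx k + c : ℝ):ℂ)]
        from rfl, this]
    push_cast
    ring
  rw [← Complex.ofReal_eq_zero, hdet, h5, h6, Finset.prod_eq_zero_iff]
  constructor
  · rintro ⟨k, -, h0⟩
    exact ⟨k, by exact_mod_cast h0⟩
  · rintro ⟨k, h0⟩
    exact ⟨k, Finset.mem_univ k, by exact_mod_cast h0⟩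

end Spec

lemma quad_factor (g c x : ℝ) :
    x ^ 2 - (2 * g ^ 2 + c ^ 2) * x + g ^ 4
      = (x - ((2 * g ^ 2 + c ^ 2) / 2 - (c / 2) * Real.sqrt (4 * g ^ 2 + c ^ 2)))
        * (x - ((2 * g ^ 2 + c ^ 2) / 2 + (c / 2) * Real.sqrt (4 * g ^ 2 + c ^ 2))) := by
  have h : Real.sqrt (4 * g ^ 2 + c ^ 2) ^ 2 = 4 * g ^ 2 + c ^ 2 :=
    Real.sq_sqrt (by positivity)
  linear_combination (c ^ 2 / 4) * h

lemma rm_nonneg (g c : ℝ) (hc : 0 ≤ c) :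
    0 ≤ (2 * g ^ 2 + c ^ 2) / 2 - (c / 2) * Real.sqrt (4 * g ^ 2 + c ^ 2) := by
  have h1 : (c / 2) * Real.sqrt (4 * g ^ 2 + c ^ 2)
      = Real.sqrt ((c / 2) ^ 2 * (4 * g ^ 2 + c ^ 2)) := by
    rw [Real.sqrt_mul (by positivity), Real.sqrt_sq (by positivity)]
  have h2 : Real.sqrt ((c / 2) ^ 2 * (4 * g ^ 2 + c ^ 2))
      ≤ Real.sqrt (((2 * g ^ 2 + c ^ 2) / 2) ^ 2) := Real.sqrt_le_sqrt (by nlinarith)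
  rw [Real.sqrt_sq (by positivity)] at h2
  rw [h1]
  linarith

lemma rp_nonneg (g c : ℝ) (hc : 0 ≤ c) :
    0 ≤ (2 * g ^ 2 + c ^ 2) / 2 + (c / 2) * Real.sqrt (4 * g ^ 2 + c ^ 2) := by
  have : 0 ≤ (c / 2) * Real.sqrt (4 * g ^ 2 + c ^ 2) := by positivity
  nlinarith [sq_nonneg g, sq_nonneg c]


/-- for `N_t = 2`, the singular values of `h_x² A_n` (the nonnegative square roots of
the eigenvalues of `(h_x²A_n)(h_x²A_n)ᵀ`) are exactly, for `k = 1,…,N_x`, the two values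
`σ_±(k) = sqrt( (2g_k² + c_h²)/2 ± (c_h/2) sqrt(4g_k² + c_h²) )` where
`g_k = 2 - 2cos(2π(k-1)/N_x) + c_h` and `c_h = h_x²/h_t`. -/
theorem singularValues_spaceTime_Nt2 (Nx : ℕ) [NeZero Nx] (hNx : 2 ≤ Nx)
    (ht hx : ℝ) (hht : 0 < ht) (hhx : 0 < hx) :
    let ch : ℝ := hx ^ 2 / ht
    let B : Matrix (Fin 2 × Fin Nx) (Fin 2 × Fin Nx) ℝ :=
      (hx ^ 2) • ((1 / ht) • (T2 ⊗ₖ (1 : Matrix (Fin Nx) (Fin Nx) ℝ)) +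
        (1 : Matrix (Fin 2) (Fin 2) ℝ) ⊗ₖ ((1 / hx ^ 2) • Cmat Nx))
    let g : Fin Nx → ℝ := fun k => 2 - 2 * Real.cos (2 * Real.pi * (k : ℕ) / Nx) + ch
    {σ : ℝ | 0 ≤ σ ∧ σ ^ 2 ∈ spectrum ℝ (B * Bᵀ)} =
      {σ : ℝ | ∃ k : Fin Nx,
        σ = Real.sqrt ((2 * (g k) ^ 2 + ch ^ 2) / 2 - (ch / 2) * Real.sqrt (4 * (g k) ^ 2 + ch ^ 2)) ∨
        σ = Real.sqrt ((2 * (g k) ^ 2 + ch ^ 2) / 2 + (ch / 2) * Real.sqrt (4 * (g k) ^ 2 + ch ^ 2))} := by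
  intro ch B g
  have hch : 0 ≤ ch := le_of_lt (by positivity)
  have hB : B = BrR Nx ch := by
    show (hx ^ 2) • ((1 / ht) • (T2 ⊗ₖ (1 : Matrix (Fin Nx) (Fin Nx) ℝ)) +
        (1 : Matrix (Fin 2) (Fin 2) ℝ) ⊗ₖ ((1 / hx ^ 2) • Cmat Nx)) = BrR Nx ch
    rw [BrR, Matrix.kronecker_smul, smul_add, smul_smul, smul_smul]
    have e1 : hx ^ 2 * (1 / ht) = ch := by
      show _ = hx ^ 2 / ht
      ring
    have e2 : hx ^ 2 * (1 / hx ^ 2) = 1 := by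
      field_simp
    rw [e1, e2, one_smul]
  have hg : ∀ k : Fin Nx, g k = cval Nx k + ch := by
    intro k
    show 2 - 2 * Real.cos (2 * Real.pi * (k : ℕ) / Nx) + ch = _
    rw [cval]
  ext σ
  simp only [Set.mem_setOf_eq]
  rw [hB, spec_char Nx ch (σ ^ 2)]
  constructor
  · rintro ⟨hσ, k, hq⟩
    refine ⟨k, ?_⟩
    rw [quad_factor (cval Nx k + ch) ch (σ ^ 2)] at hq
    rcases mul_eq_zero.1 hq with h | h
    · left
      rw [hg k]
      rw [sub_eq_zero] at h
      rw [← h, Real.sqrt_sq hσ]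
    · right
      rw [hg k]
      rw [sub_eq_zero] at h
      rw [← h, Real.sqrt_sq hσ]
  · rintro ⟨k, h | h⟩
    · have hr := rm_nonneg (g k) ch hch
      have hσ : 0 ≤ σ := h ▸ Real.sqrt_nonneg _
      refine ⟨hσ, k, ?_⟩
      have hsq : σ ^ 2 = (2 * (g k) ^ 2 + ch ^ 2) / 2
          - (ch / 2) * Real.sqrt (4 * (g k) ^ 2 + ch ^ 2) := by
        rw [h, Real.sq_sqrt hr]
      rw [hg k] at hsq
      rw [quad_factor (cval Nx k + ch) ch (σ ^ 2), hsq]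
      ring
    · have hr := rp_nonneg (g k) ch hch
      have hσ : 0 ≤ σ := h ▸ Real.sqrt_nonneg _
      refine ⟨hσ, k, ?_⟩
      have hsq : σ ^ 2 = (2 * (g k) ^ 2 + ch ^ 2) / 2
          + (ch / 2) * Real.sqrt (4 * (g k) ^ 2 + ch ^ 2) := by
        rw [h, Real.sq_sqrt hr]
      rw [hg k] at hsq
      rw [quad_factor (cval Nx k + ch) ch (σ ^ 2), hsq]
      ring
end

section
/- The matrix h_x^4 A_n A_n^T, where A_n = (1/h_t) T_{N_t}(f_J) ⊗ I_{N_x} + I_{N_t} ⊗ (1/h_x^2) C_{N_x}(f_Q), is the N_t × N_t block tridiagonal matrix with diagonal blocks \tilde{Q}^2 (first block) and \tilde{Q}^2 + c_h^2 I (remaining blocks) and off-diagonal blocks -c_h \tilde{Q}, where \tilde{Q} = C_{N_x}(f_Q) + c_h I and c_h = h_x^2/h_t. -/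
open Matrix
open scoped Kronecker

/-- The lower bidiagonal Toeplitz matrix `T_m(1 - e^{𝐢θ})` (real version). -/
def Tmat (m : ℕ) : Matrix (Fin m) (Fin m) ℝ :=
  Matrix.of fun i j => if i = j then 1 else if (i : ℕ) = (j : ℕ) + 1 then -1 else 0

set_option linter.unreachableTactic false
set_option linter.unusedTactic false

lemma TT_apply (m : ℕ) (i j : Fin m) :
    (Tmat m * (Tmat m)ᵀ) i j =
      if i = j then (if (i : ℕ) = 0 then 1 else 2)
      else if (i : ℕ) = (j : ℕ) + 1 ∨ (j : ℕ) = (i : ℕ) + 1 then -1 else 0 := by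
  rw [mul_apply]
  by_cases h0 : (i : ℕ) = 0
  · have split : ∀ k : Fin m, Tmat m i k * (Tmat m)ᵀ k j
        = (if k = i then Tmat m j i else 0) := by
      intro k
      by_cases hk : k = i
      · subst hk
        simp [Tmat, transpose_apply, Fin.ext_iff]
      · have h1 : ¬ ((i:ℕ) = (k:ℕ)) := fun h => hk (Fin.ext h).symm
        have h2 : ¬ ((i:ℕ) = (k:ℕ) + 1) := by omega
        simp [Tmat, transpose_apply, Fin.ext_iff, h1, h2, hk]
    rw [Finset.sum_congr rfl fun k _ => split k, Finset.sum_ite_eq' Finset.univ i]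
    simp only [Finset.mem_univ, if_true, Tmat, of_apply, Fin.ext_iff]
    split_ifs <;> first | ring1 | (exfalso; omega) | (exfalso; simp_all)
  · have hlt : (i:ℕ) - 1 < m := lt_of_le_of_lt (Nat.sub_le _ _) i.isLt
    set k₀ : Fin m := ⟨(i:ℕ) - 1, hlt⟩ with hk₀
    have hcoe : (k₀ : ℕ) = (i:ℕ) - 1 := rfl
    have hne : i ≠ k₀ := by
      intro h; rw [Fin.ext_iff, hcoe] at h; omega
    have split : ∀ k : Fin m, Tmat m i k * (Tmat m)ᵀ k j
        = (if k = i then Tmat m j i else 0) + (if k = k₀ then -(Tmat m j k₀) else 0) := by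
      intro k
      by_cases hk : k = i
      · subst hk
        rw [if_pos rfl, if_neg hne]
        simp [Tmat, transpose_apply, Fin.ext_iff]
      · by_cases hk2 : k = k₀
        · subst hk2
          rw [if_neg hk, if_pos rfl]
          have h1 : ¬ ((i:ℕ) = (k₀:ℕ)) := by rw [hcoe]; omega
          have h2 : ((i:ℕ) = (k₀:ℕ) + 1) := by rw [hcoe]; omega
          have hv : Tmat m i k₀ = -1 := by
            simp only [Tmat, of_apply]
            rw [if_neg (fun h => h1 (congrArg Fin.val h)), if_pos h2]
          rw [transpose_apply, hv]
          ring
        · rw [if_neg hk, if_neg hk2]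
          have h1 : ¬ ((i:ℕ) = (k:ℕ)) := fun h => hk (Fin.ext h).symm
          have h2 : ¬ ((i:ℕ) = (k:ℕ) + 1) := by
            intro h
            exact hk2 (Fin.ext (by rw [hcoe]; omega))
          simp [Tmat, transpose_apply, Fin.ext_iff, h1, h2]
    rw [Finset.sum_congr rfl fun k _ => split k, Finset.sum_add_distrib,
      Finset.sum_ite_eq' Finset.univ i, Finset.sum_ite_eq' Finset.univ k₀]
    simp only [Finset.mem_univ, if_true, Tmat, of_apply, Fin.ext_iff, hcoe]
    split_ifs <;> first | ring1 | (exfalso; omega) | (exfalso; simp_all)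

lemma Cmat_transpose (m : ℕ) [NeZero m] : (Cmat m)ᵀ = Cmat m := by
  simp only [Cmat, transpose_sub, transpose_smul, transpose_one, transpose_transpose]
  abel

/-- `h_x⁴ A_n A_nᵀ` is the `N_t × N_t` block tridiagonal matrix with diagonal
blocks `Q̃²` (first) and `Q̃² + c_h² I` (others), and off-diagonal blocks `-c_h Q̃`, where
`Q̃ = C_{N_x}(f_Q) + c_h I`, `c_h = h_x²/h_t`. -/
theorem blockTridiag_AAt (Nt Nx : ℕ) [NeZero Nx] (hNx : 2 ≤ Nx)
    (ht hx : ℝ) (hht : 0 < ht) (hhx : 0 < hx) :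
    let ch : ℝ := hx ^ 2 / ht
    let A : Matrix (Fin Nt × Fin Nx) (Fin Nt × Fin Nx) ℝ :=
      (1 / ht) • (Tmat Nt ⊗ₖ (1 : Matrix (Fin Nx) (Fin Nx) ℝ)) +
        (1 : Matrix (Fin Nt) (Fin Nt) ℝ) ⊗ₖ ((1 / hx ^ 2) • Cmat Nx)
    let Qt : Matrix (Fin Nx) (Fin Nx) ℝ := Cmat Nx + ch • (1 : Matrix (Fin Nx) (Fin Nx) ℝ)
    (hx ^ 4) • (A * Aᵀ) =
      Matrix.of fun (p q : Fin Nt × Fin Nx) =>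
        if p.1 = q.1 then
          (if (p.1 : ℕ) = 0 then (Qt * Qt) p.2 q.2
           else (Qt * Qt + (ch ^ 2) • (1 : Matrix (Fin Nx) (Fin Nx) ℝ)) p.2 q.2)
        else if (p.1 : ℕ) = (q.1 : ℕ) + 1 ∨ (q.1 : ℕ) = (p.1 : ℕ) + 1 then
          ((-ch) • Qt) p.2 q.2
        else 0 := by
  intro ch A Qt
  have hx2 : (hx : ℝ) ^ 2 ≠ 0 := pow_ne_zero _ (ne_of_gt hhx)
  have htne : ht ≠ 0 := ne_of_gt hht
  -- step 1 : hx² • A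
  have hB : (hx ^ 2) • A =
      ch • (Tmat Nt ⊗ₖ (1 : Matrix (Fin Nx) (Fin Nx) ℝ)) +
        (1 : Matrix (Fin Nt) (Fin Nt) ℝ) ⊗ₖ Cmat Nx := by
    show (hx ^ 2) • ((1 / ht) • (Tmat Nt ⊗ₖ (1 : Matrix (Fin Nx) (Fin Nx) ℝ)) +
        (1 : Matrix (Fin Nt) (Fin Nt) ℝ) ⊗ₖ ((1 / hx ^ 2) • Cmat Nx)) = _
    rw [kronecker_smul, smul_add, smul_smul, smul_smul]
    have e1 : hx ^ 2 * (1 / ht) = ch := by simp only [ch]; ring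
    have e2 : hx ^ 2 * (1 / hx ^ 2) = 1 := by field_simp
    rw [e1, e2, one_smul]
  -- step 2 : the scaled product
  have key : (hx ^ 4) • (A * Aᵀ) = ((hx ^ 2) • A) * ((hx ^ 2) • A)ᵀ := by
    rw [transpose_smul, smul_mul_assoc, mul_smul_comm, smul_smul]
    congr 1
    ring
  rw [key, hB]
  -- step 3 : expand the product
  have hCt : (Cmat Nx)ᵀ = Cmat Nx := Cmat_transpose Nx
  simp only [transpose_add, transpose_smul, ← kroneckerMap_transpose, transpose_one, hCt,
    add_mul, mul_add, smul_mul_assoc, mul_smul_comm, smul_smul, ← mul_kronecker_mul,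
    Matrix.one_mul, Matrix.mul_one]
  -- step 4 : expand Qt * Qt
  have hQ : Qt * Qt = Cmat Nx * Cmat Nx + (2 * ch) • Cmat Nx + (ch * ch) • (1 : Matrix (Fin Nx) (Fin Nx) ℝ) := by
    show (Cmat Nx + ch • 1) * (Cmat Nx + ch • 1) = _
    simp only [add_mul, mul_add, smul_mul_assoc, mul_smul_comm, Matrix.one_mul,
      Matrix.mul_one, smul_smul]
    module
  have hQapp : ∀ a b : Fin Nx, Qt a b = Cmat Nx a b + (if a = b then ch else 0) := by
    intro a b
    show (Cmat Nx + ch • (1 : Matrix (Fin Nx) (Fin Nx) ℝ)) a b = _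
    simp [Matrix.add_apply, Matrix.smul_apply, one_apply, mul_ite, mul_one, mul_zero]
  -- step 5 : pointwise
  ext p q
  obtain ⟨p1, p2⟩ := p
  obtain ⟨q1, q2⟩ := q
  simp only [Matrix.add_apply, Matrix.smul_apply, kroneckerMap_apply, one_apply, of_apply, hQ, hQapp,
    TT_apply, transpose_apply, smul_eq_mul, mul_ite, mul_one, mul_zero, mul_neg]
  simp only [Tmat, of_apply, Fin.ext_iff]
  split_ifs <;> first | ring1 | (exfalso; omega)
end

section
/- The maximum eigenvalue of the N_t × N_t tridiagonal matrix M with diagonal entries ((4+c_h)^2, (4+c_h)^2 + c_h^2, ..., (4+c_h)^2 + c_h^2) and off-diagonal entries -c_h(4+c_h) is strictly less than g(π) = ((4+c_h) + c_h)^2 = (4 + 2c_h)^2, where g(θ) = (4+c_h)^2 + c_h^2 - 2c_h(4+c_h)cos θ and c_h > 0. -/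
open Matrix Finset

/-- every eigenvalue of the `N_t × N_t` symmetric tridiagonal matrix `M` with
`(1,1)` entry `(4+c_h)²`, remaining diagonal entries `(4+c_h)² + c_h²`, and off-diagonal entries
`-c_h(4+c_h)`, is strictly less than `g(π) = (4 + 2c_h)²`. -/
theorem max_eigenvalue_lt (Nt : ℕ) (hNt : 1 ≤ Nt) (ch : ℝ) (hch : 0 < ch) :
    let M : Matrix (Fin Nt) (Fin Nt) ℝ :=
      Matrix.of fun i j =>
        if i = j then (if (i : ℕ) = 0 then (4 + ch) ^ 2 else (4 + ch) ^ 2 + ch ^ 2)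
        else if (i : ℕ) = (j : ℕ) + 1 ∨ (j : ℕ) = (i : ℕ) + 1 then -ch * (4 + ch)
        else 0
    ∀ lam ∈ spectrum ℝ M, lam < (4 + 2 * ch) ^ 2 := by
  intro M lam hlam
  set a : ℝ := 4 + ch with ha_def
  have ha : 0 < a := by positivity
  set b : ℝ := (4 + 2 * ch) ^ 2 with hb_def
  -- extract an eigenvector
  rw [spectrum.mem_iff] at hlam
  have hdet : (algebraMap ℝ (Matrix (Fin Nt) (Fin Nt) ℝ) lam - M).det = 0 := by
    by_contra h
    exact hlam (((algebraMap ℝ (Matrix (Fin Nt) (Fin Nt) ℝ) lam - M).isUnit_iff_isUnit_det).2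
      (isUnit_iff_ne_zero.2 h))
  obtain ⟨v, hv0, hv⟩ := Matrix.exists_mulVec_eq_zero_iff.2 hdet
  have hMv : M.mulVec v = lam • v := by
    have h1 : (algebraMap ℝ (Matrix (Fin Nt) (Fin Nt) ℝ) lam - M) *ᵥ v
        = lam • v - M *ᵥ v := by
      rw [Matrix.sub_mulVec, Algebra.algebraMap_eq_smul_one, Matrix.smul_mulVec,
        Matrix.one_mulVec]
    rw [h1] at hv
    exact (sub_eq_zero.mp hv).symm
  -- extended vector on ℕ
  set w : ℕ → ℝ := fun k => if h : k < Nt then v ⟨k, h⟩ else 0 with hw_def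
  have hwv : ∀ i : Fin Nt, v i = w (i : ℕ) := by
    intro i
    simp [hw_def, i.isLt]
  have hwz : ∀ k, Nt ≤ k → w k = 0 := by
    intro k hk
    simp [hw_def, Nat.not_lt.2 hk]
  set d : ℕ → ℝ := fun k => if k = 0 then a ^ 2 else a ^ 2 + ch ^ 2 with hd_def
  set wp : ℕ → ℝ := fun k => Nat.casesOn k 0 (fun m => w m) with hwp_def
  -- the rows of M applied to v
  have hinner : ∀ i : Fin Nt, (M *ᵥ v) i
      = d (i : ℕ) * w (i : ℕ) + (-(ch * a)) * w ((i : ℕ) + 1)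
        + (-(ch * a)) * wp (i : ℕ) := by
    intro i
    have hsplit : ∀ j : Fin Nt, M i j * v j
        = (if i = j then d (j : ℕ) * w (j : ℕ) else 0)
          + (if (j : ℕ) = (i : ℕ) + 1 then (-(ch * a)) * w (j : ℕ) else 0)
          + (if (i : ℕ) = (j : ℕ) + 1 then (-(ch * a)) * w (j : ℕ) else 0) := by
      intro j
      rw [hwv j]
      by_cases hij : i = j
      · subst hij
        have h1 : ¬ ((i : ℕ) = (i : ℕ) + 1) := by omega
        simp [M, Matrix.of_apply, h1, hd_def, ha_def]
      · have hne : (i : ℕ) ≠ (j : ℕ) := fun h => hij (Fin.ext h)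
        by_cases h1 : (i : ℕ) = (j : ℕ) + 1
        · have h2 : ¬ ((j : ℕ) = (i : ℕ) + 1) := by omega
          have hM : M i j = -ch * (4 + ch) := by simp [M, Matrix.of_apply, hij, h1]
          rw [hM, if_neg hij, if_neg h2, if_pos h1]
          ring
        · by_cases h2 : (j : ℕ) = (i : ℕ) + 1
          · have hM : M i j = -ch * (4 + ch) := by simp [M, Matrix.of_apply, hij, h2]
            rw [hM, if_neg hij, if_pos h2, if_neg h1]
            ring
          · have hM : M i j = 0 := by simp [M, Matrix.of_apply, hij, h1, h2]
            rw [hM, if_neg hij, if_neg h2, if_neg h1]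
            ring
    have hrow : (M *ᵥ v) i = ∑ j : Fin Nt, M i j * v j := rfl
    rw [hrow]
    rw [Finset.sum_congr rfl (fun j _ => hsplit j)]
    rw [Finset.sum_add_distrib, Finset.sum_add_distrib]
    have e1 : (∑ j : Fin Nt, if i = j then d (j : ℕ) * w (j : ℕ) else 0)
        = d (i : ℕ) * w (i : ℕ) := by
      rw [Finset.sum_ite_eq]
      simp
    have e2 : (∑ j : Fin Nt, if (j : ℕ) = (i : ℕ) + 1 then (-(ch * a)) * w (j : ℕ) else 0)
        = (-(ch * a)) * w ((i : ℕ) + 1) := by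
      rw [Fin.sum_univ_eq_sum_range (fun k => if k = (i : ℕ) + 1 then (-(ch * a)) * w k else 0)]
      rw [Finset.sum_ite_eq']
      by_cases h : (i : ℕ) + 1 ∈ Finset.range Nt
      · rw [if_pos h]
      · rw [if_neg h]
        rw [hwz _ (Nat.le_of_not_lt (fun hlt => h (Finset.mem_range.2 hlt)))]
        ring
    have e3 : (∑ j : Fin Nt, if (i : ℕ) = (j : ℕ) + 1 then (-(ch * a)) * w (j : ℕ) else 0)
        = (-(ch * a)) * wp (i : ℕ) := by
      rw [Fin.sum_univ_eq_sum_range (fun k => if (i : ℕ) = k + 1 then (-(ch * a)) * w k else 0)]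
      rcases hi : (i : ℕ) with _ | m
      · simp [hwp_def]
      · have hcond : ∀ k, (m + 1 = k + 1) = (k = m) := by
          intro k; exact propext (by constructor <;> omega)
        simp only [hcond]
        rw [Finset.sum_ite_eq']
        have hm : m ∈ Finset.range Nt := by
          have := i.isLt; rw [hi] at this; exact Finset.mem_range.2 (by omega)
        rw [if_pos hm]
    rw [e1, e2, e3]
  -- sums over ranges
  set S : ℝ := ∑ k ∈ Finset.range Nt, w k ^ 2 with hS_def
  set P : ℝ := ∑ k ∈ Finset.range Nt, w k * w (k + 1) with hP_def
  set T : ℝ := ∑ k ∈ Finset.range Nt, (w k + w (k + 1)) ^ 2 with hT_def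
  have hSv : v ⬝ᵥ v = S := by
    rw [hS_def, dotProduct]
    rw [← Fin.sum_univ_eq_sum_range (fun k => w k ^ 2) Nt]
    exact Finset.sum_congr rfl (fun i _ => by rw [hwv i]; ring)
  have hQ : v ⬝ᵥ (M *ᵥ v) = ∑ k ∈ Finset.range Nt,
      (d k * w k ^ 2 + (-(ch * a)) * (w k * w (k + 1)) + (-(ch * a)) * (w k * wp k)) := by
    rw [dotProduct]
    rw [← Fin.sum_univ_eq_sum_range
      (fun k => d k * w k ^ 2 + (-(ch * a)) * (w k * w (k + 1)) + (-(ch * a)) * (w k * wp k)) Nt]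
    refine Finset.sum_congr rfl (fun i _ => ?_)
    rw [hwv i, hinner i]
    ring
  have h0mem : (0 : ℕ) ∈ Finset.range Nt := Finset.mem_range.2 hNt
  have hD : ∑ k ∈ Finset.range Nt, d k * w k ^ 2 = (a ^ 2 + ch ^ 2) * S - ch ^ 2 * w 0 ^ 2 := by
    have hterm : ∀ k ∈ Finset.range Nt, d k * w k ^ 2
        = (a ^ 2 + ch ^ 2) * w k ^ 2 - (if k = 0 then ch ^ 2 * w k ^ 2 else 0) := by
      intro k _
      by_cases hk : k = 0 <;> simp [hd_def, hk] <;> ring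
    rw [Finset.sum_congr rfl hterm, Finset.sum_sub_distrib, Finset.sum_ite_eq', if_pos h0mem,
      ← Finset.mul_sum, ← hS_def]
  obtain ⟨m, hm⟩ : ∃ m, Nt = m + 1 := ⟨Nt - 1, by omega⟩
  have hWP : ∑ k ∈ Finset.range Nt, w k * wp k = P := by
    rw [hP_def, hm, Finset.sum_range_succ', Finset.sum_range_succ]
    have h1 : w 0 * wp 0 = 0 := by simp [hwp_def]
    have h2 : w m * w (m + 1) = 0 := by rw [hwz (m + 1) (by omega)]; ring
    rw [h1, h2, add_zero, add_zero]
    exact Finset.sum_congr rfl (fun k _ => by simp [hwp_def]; ring)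
  have hShift : ∑ k ∈ Finset.range Nt, w (k + 1) ^ 2 = S - w 0 ^ 2 := by
    have h1 : ∑ k ∈ Finset.range (Nt + 1), w k ^ 2 = S + w Nt ^ 2 := by
      rw [Finset.sum_range_succ, hS_def]
    have h2 : ∑ k ∈ Finset.range (Nt + 1), w k ^ 2
        = ∑ k ∈ Finset.range Nt, w (k + 1) ^ 2 + w 0 ^ 2 := Finset.sum_range_succ' _ _
    have h3 : w Nt = 0 := hwz Nt le_rfl
    rw [h3] at h1
    nlinarith [h1, h2]
  have hT : T = S + 2 * P + (S - w 0 ^ 2) := by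
    have hterm : ∀ k ∈ Finset.range Nt, (w k + w (k + 1)) ^ 2
        = w k ^ 2 + 2 * (w k * w (k + 1)) + w (k + 1) ^ 2 := fun k _ => by ring
    rw [hT_def, Finset.sum_congr rfl hterm, Finset.sum_add_distrib, Finset.sum_add_distrib,
      ← Finset.mul_sum, hShift, ← hS_def, ← hP_def]
  have hQ3 : v ⬝ᵥ (M *ᵥ v)
      = ((a ^ 2 + ch ^ 2) * S - ch ^ 2 * w 0 ^ 2) - ch * a * P - ch * a * P := by
    rw [hQ, Finset.sum_add_distrib, Finset.sum_add_distrib, ← Finset.mul_sum, ← Finset.mul_sum,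
      hD, ← hP_def, hWP]
    ring
  have key : b * S - v ⬝ᵥ (M *ᵥ v) = (a * ch + ch ^ 2) * w 0 ^ 2 + (a * ch) * T := by
    rw [hQ3, hT, hb_def, ha_def]
    ring
  -- positivity of the right-hand side
  have hTnn : 0 ≤ T := Finset.sum_nonneg (fun k _ => sq_nonneg _)
  have hc1 : 0 < a * ch + ch ^ 2 := add_pos (mul_pos ha hch) (pow_pos hch 2)
  have hpos : 0 < (a * ch + ch ^ 2) * w 0 ^ 2 + (a * ch) * T := by
    by_contra hle
    push_neg at hle
    have hn1 : 0 ≤ (a * ch + ch ^ 2) * w 0 ^ 2 := mul_nonneg hc1.le (sq_nonneg _)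
    have hn2 : 0 ≤ (a * ch) * T := mul_nonneg (mul_pos ha hch).le hTnn
    have heq : (a * ch + ch ^ 2) * w 0 ^ 2 + (a * ch) * T = 0 := le_antisymm hle (by positivity)
    obtain ⟨he1, he2⟩ := (add_eq_zero_iff_of_nonneg hn1 hn2).1 heq
    have hw0 : w 0 = 0 := by
      have := (mul_eq_zero.1 he1).resolve_left (ne_of_gt hc1)
      exact pow_eq_zero_iff (n := 2) (by norm_num) |>.1 this
    have hT0 : T = 0 := by
      have := (mul_eq_zero.1 he2).resolve_left (ne_of_gt (mul_pos ha hch))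
      exact this
    have hstep : ∀ k ∈ Finset.range Nt, w k + w (k + 1) = 0 := by
      intro k hk
      have hsq := (Finset.sum_eq_zero_iff_of_nonneg
        (fun k _ => sq_nonneg (w k + w (k + 1)))).1 (hT_def.symm.trans hT0) k hk
      exact pow_eq_zero_iff (n := 2) (by norm_num) |>.1 hsq
    have hall : ∀ k, w k = 0 := by
      intro k
      induction k with
      | zero => exact hw0
      | succ n ih =>
        by_cases hn : n < Nt
        · have := hstep n (Finset.mem_range.2 hn)
          linarith
        · exact hwz (n + 1) (by omega)
    exact hv0 (funext (fun i => by rw [hwv i, hall]; simp))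
  -- conclusion
  have hlamS : lam * S = v ⬝ᵥ (M *ᵥ v) := by
    rw [hMv, dotProduct_smul, smul_eq_mul, hSv]
  have hSpos : 0 < S := by
    have hnn : (0:ℝ) ≤ S := hS_def ▸ Finset.sum_nonneg (fun k _ => sq_nonneg (w k))
    rcases hnn.lt_or_eq with h | h
    · exact h
    · exact absurd (dotProduct_self_eq_zero.1 (hSv.trans h.symm)) hv0
  have : lam * S < b * S := by linarith [key, hpos, hlamS]
  exact (mul_lt_mul_iff_left₀ hSpos).1 this
end
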